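/- Let α ∈ ℚ̄ satisfy α² − α − 1/2 = 0. Let (x_n,y_n)_{n≥0} be any sequence in ℚ̄² such that (x_0,y_0) = (α,α), (x_1,y_1) = (α,−α), (x_2,y_2) = (−α,α), x_3 = α and y_3² = α⁴/(1/2 − α), and for every n ≥ 4: y_n ≠ 0, x_{n−1} = x_n⁴/y_n² − 1/2, and y_{n−1} = x_n. Then the degrees [ℚ(x_n,y_n) : ℚ] of the number fields generated by the coordinates tend to infinity as n → ∞; that is, for every N there is an M such that [ℚ(x_n,y_n) : ℚ] > N for all n ≥ M. -/

import Mathlib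

/-- A fixed algebraic closure of `ℚ`. -/
noncomputable def Qbar : Type := AlgebraicClosure ℚ

noncomputable instance : Field Qbar := inferInstanceAs (Field (AlgebraicClosure ℚ))
noncomputable instance : Algebra ℚ Qbar := inferInstanceAs (Algebra ℚ (AlgebraicClosure ℚ))

/-!
Let `F = ℚ(x_n, y_n)`: running the recursion backwards, it contains `(x_k, y_k)` for `2 ≤ k ≤ n`,
and `α = x_3`. Since `(1/2 - α)² = 3/4`, at a prime `P` of `F` above `3` we have
`2 v_P(1/2 - α) = v_P(3) > 0`, while `α` and `α + 1/2` are `P`-units. Put `w_k = -v_P(y_k)`.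
The identity `x_{k-1} + 1/2 = x_k⁴ / y_k²` with `x_k = y_{k-1}` gives `4 w_3 = v_P(3)`,
`w_4 = 2 w_3`, and, as long as `w_{k-2} > 0` (so that `v_P(y_{k-2} + 1/2) = v_P(y_{k-2})`),
`2 w_k + w_{k-2} = 4 w_{k-1}`; hence the `w_k` are positive and increasing. Read as
`w_{k-2} = 2 (2 w_{k-1} - w_k)`, the recursion shows `2^t ∣ w_3` whenever `3 + 2t ≤ n`.
So `v_P(3) ≥ 2^{t+2}`, and `v_P(3)`, the ramification index of `P` over `3`, is at most `[F : ℚ]`.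
-/

open WithZero NumberField IsDedekindDomain

instance : CharZero Qbar := inferInstanceAs (CharZero (AlgebraicClosure ℚ))

instance : Algebra.IsAlgebraic ℚ Qbar := AlgebraicClosure.isAlgebraic ℚ

def f42 {K : Type*} [Field K] (p : K × K) : K × K := (p.1 ^ 4 / p.2 ^ 2 - 2⁻¹, p.1)

section Orbit

variable {K L : Type*} [Field K] [Field L]

lemma map_f42 (φ : K →+* L) (p : K × K) : Prod.map φ φ (f42 p) = f42 (Prod.map φ φ p) := by
  simp [f42, map_ofNat]

lemma eq_iterate_of_forall_eq_apply_succ {α : Type*} {g : α → α} {s : ℕ → α} {a : ℕ}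
    (h : ∀ k, a ≤ k → s k = g (s (k + 1))) (j : ℕ) {k : ℕ} (hk : a ≤ k) :
    s k = g^[j] (s (k + j)) := by
  induction j with
  | zero => rfl
  | succ j ih => rw [ih, h (k + j) (by omega), ← Function.iterate_succ_apply, ← add_assoc]

lemma exists_f42_orbit_map (φ : K →+* L) {s : ℕ → L × L} {a n : ℕ}
    (hs : ∀ k, a ≤ k → s k = f42 (s (k + 1))) {p : K × K} (hp : Prod.map φ φ p = s n) :
    ∃ t : ℕ → K × K, (∀ k < n, t k = f42 (t (k + 1))) ∧
      ∀ k, a ≤ k → k ≤ n → Prod.map φ φ (t k) = s k := by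
  refine ⟨fun k => f42^[n - k] p, fun k hk => ?_, fun k hak hkn => ?_⟩
  · show f42^[n - k] p = f42 (f42^[n - (k + 1)] p)
    rw [show n - k = n - (k + 1) + 1 by omega, Function.iterate_succ_apply']
  · rw [(Function.Semiconj.iterate_right (map_f42 φ) (n - k)) p, hp,
      eq_iterate_of_forall_eq_apply_succ hs (n - k) hak, Nat.add_sub_cancel' hkn]

variable [CharZero K] {α : K} {s : ℕ → K × K}

lemma ne_zero_of_sq_sub_sub_inv_two (hα : α ^ 2 - α - 2⁻¹ = 0) : α ≠ 0 := by
  rintro rfl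
  norm_num at hα

lemma eq_f42_of_backward_orbit (hα : α ^ 2 - α - 2⁻¹ = 0) (h2 : s 2 = (-α, α))
    (h3x : (s 3).1 = α) (h3y : (s 3).2 ^ 2 = α ^ 4 / (2⁻¹ - α))
    (hrec : ∀ n, 4 ≤ n → (s n).2 ≠ 0 ∧
      (s (n - 1)).1 = (s n).1 ^ 4 / (s n).2 ^ 2 - 2⁻¹ ∧ (s (n - 1)).2 = (s n).1) :
    ∀ k, 2 ≤ k → s k = f42 (s (k + 1)) := by
  intro k hk
  rcases hk.eq_or_lt with rfl | hk
  · rw [h2, f42, h3x, h3y, div_div_cancel₀ (pow_ne_zero 4 (ne_zero_of_sq_sub_sub_inv_two hα))]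
    simp
  · obtain ⟨-, hx, hy⟩ := hrec (k + 1) (by omega)
    exact Prod.ext hx hy

lemma snd_ne_zero_of_backward_orbit (hα : α ^ 2 - α - 2⁻¹ = 0)
    (h3y : (s 3).2 ^ 2 = α ^ 4 / (2⁻¹ - α)) (hrec : ∀ n, 4 ≤ n → (s n).2 ≠ 0) :
    ∀ k, 3 ≤ k → (s k).2 ≠ 0 := by
  intro k hk
  rcases hk.eq_or_lt with rfl | hk
  · have hα' : 2⁻¹ - α ≠ 0 := by
      intro h
      rw [← sub_eq_zero.1 h] at hα
      norm_num at hα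
    intro h
    refine div_ne_zero (pow_ne_zero 4 (ne_zero_of_sq_sub_sub_inv_two hα)) hα' ?_
    rw [← h3y, h, zero_pow two_ne_zero]
  · exact hrec k hk

end Orbit

section Recurrence

variable {w : ℕ → ℤ} {m : ℕ}

lemma two_pow_dvd_of_recurrence (h : ∀ k, k + 2 ≤ m → 2 * w (k + 2) + w k = 4 * w (k + 1))
    (t : ℕ) : ∀ k, k + 2 * t ≤ m → 2 ^ t ∣ w k := by
  induction t with
  | zero => simp
  | succ t ih =>
    intro k hk
    have hw : w k = 2 * (2 * w (k + 1) - w (k + 2)) := by linarith [h k (by omega)]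
    rw [hw, pow_succ']
    exact mul_dvd_mul_left 2 <|
      dvd_sub (dvd_mul_of_dvd_right (ih (k + 1) (by omega)) 2) (ih (k + 2) (by omega))

lemma two_pow_le_of_recurrence (h0 : 0 < w 0) (h01 : w 0 < w 1)
    (h : ∀ k, k + 2 ≤ m → 0 < w k → 2 * w (k + 2) + w k = 4 * w (k + 1))
    (j : ℕ) (hj : 2 * j + 1 ≤ m) : 2 ^ j ≤ w 0 := by
  have hmono : ∀ k, k + 1 ≤ m → 0 < w k ∧ w k < w (k + 1) := by
    intro k
    induction k with
    | zero => exact fun _ => ⟨h0, h01⟩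
    | succ k ih =>
      intro hk
      obtain ⟨hpos, hlt⟩ := ih (by omega)
      have := h k (by omega) hpos
      constructor <;> linarith
  exact Int.le_of_dvd h0 <|
    two_pow_dvd_of_recurrence (fun k hk => h k hk (hmono k (by omega)).1) j 0 (by omega)

end Recurrence

section Valuation

variable {K : Type*} [Field K] (v : Valuation K ℤᵐ⁰)

lemma log_valuation_add_eq_of_lt {x y : K} (hx : x ≠ 0) (hy : y ≠ 0)
    (h : log (v y) < log (v x)) : log (v (x + y)) = log (v x) := by
  rw [v.map_add_eq_of_lt_left ((log_lt_log (v.ne_zero_iff.2 hy) (v.ne_zero_iff.2 hx)).1 h)]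

lemma f42_fst_add_inv_two (p : K × K) : (f42 p).1 + 2⁻¹ = p.1 ^ 4 / p.2 ^ 2 := by
  simp [f42]

lemma log_valuation_f42_fst_add_inv_two {p : K × K} (h1 : p.1 ≠ 0) (h2 : p.2 ≠ 0) :
    log (v ((f42 p).1 + 2⁻¹)) = 4 * log (v p.1) - 2 * log (v p.2) := by
  rw [f42_fst_add_inv_two, map_div₀, log_div (by simp [h1]) (by simp [h2])]
  simp

lemma valuation_two_eq_one (hv3 : v 3 < 1) : v 2 = 1 := by
  have : v (-1 + 3) = 1 := by
    rw [v.map_add_eq_of_lt_left (by rwa [v.map_neg, v.map_one]), v.map_neg, v.map_one]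
  norm_num at this
  exact this

lemma two_mul_inv_two_of_valuation (hv3 : v 3 < 1) : (2 : K) * 2⁻¹ = 1 :=
  mul_inv_cancel₀ fun h => by simpa [h] using valuation_two_eq_one v hv3

lemma valuation_inv_two_sub_sq {α : K} (hv3 : v 3 < 1) (hα : α ^ 2 - α - 2⁻¹ = 0) :
    v (2⁻¹ - α) ^ 2 = v 3 := by
  have h2 := two_mul_inv_two_of_valuation v hv3
  rw [← map_pow, show (2⁻¹ - α) ^ 2 = 3 * 2⁻¹ ^ 2 by linear_combination hα - (α + 2⁻¹) * h2,
    map_mul, map_pow, map_inv₀, valuation_two_eq_one v hv3]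
  simp

lemma valuation_inv_two_sub_lt_one {α : K} (hv3 : v 3 < 1) (hα : α ^ 2 - α - 2⁻¹ = 0) :
    v (2⁻¹ - α) < 1 := by
  rwa [← pow_lt_one_iff_of_nonneg zero_le two_ne_zero, valuation_inv_two_sub_sq v hv3 hα]

lemma valuation_eq_one_of_sq_sub_sub_inv_two {α : K} (hv3 : v 3 < 1)
    (hα : α ^ 2 - α - 2⁻¹ = 0) : v α = 1 := by
  have hv : v 2⁻¹ = 1 := by rw [map_inv₀, valuation_two_eq_one v hv3, inv_one]
  rw [show α = 2⁻¹ - (2⁻¹ - α) by ring,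
    v.map_sub_eq_of_lt_left (hv ▸ valuation_inv_two_sub_lt_one v hv3 hα), hv]

lemma valuation_add_inv_two_eq_one {α : K} (hv3 : v 3 < 1) (hα : α ^ 2 - α - 2⁻¹ = 0) :
    v (α + 2⁻¹) = 1 := by
  rw [show α + 2⁻¹ = 1 - (2⁻¹ - α) by linear_combination two_mul_inv_two_of_valuation v hv3,
    v.map_one_sub_of_lt (valuation_inv_two_sub_lt_one v hv3 hα)]

lemma fst_succ_eq_snd_of_f42_orbit {t : ℕ → K × K} {m : ℕ}
    (ht : ∀ k, 2 ≤ k → k < m → t k = f42 (t (k + 1))) {k : ℕ} (hk : 2 ≤ k) (hkm : k < m) :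
    (t (k + 1)).1 = (t k).2 := by
  rw [ht k hk hkm, f42]

lemma log_valuation_fst_add_inv_two_of_f42_orbit {t : ℕ → K × K} {m : ℕ}
    (ht : ∀ k, 2 ≤ k → k < m → t k = f42 (t (k + 1)))
    (hy : ∀ k, 2 ≤ k → k ≤ m → (t k).2 ≠ 0) {k : ℕ} (hk : 2 ≤ k) (hkm : k < m) :
    log (v ((t k).1 + 2⁻¹)) = 4 * log (v (t k).2) - 2 * log (v (t (k + 1)).2) := by
  have hxy := fst_succ_eq_snd_of_f42_orbit ht hk hkm
  have h := log_valuation_f42_fst_add_inv_two v (p := t (k + 1))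
    (hxy ▸ hy k hk hkm.le) (hy (k + 1) (by omega) hkm)
  rwa [← ht k hk hkm, hxy] at h

lemma log_valuation_snd_recurrence_of_f42_orbit (hv2 : v 2 = 1) {t : ℕ → K × K} {m : ℕ}
    (ht : ∀ k, 2 ≤ k → k < m → t k = f42 (t (k + 1)))
    (hy : ∀ k, 2 ≤ k → k ≤ m → (t k).2 ≠ 0) {k : ℕ} (hk : 2 ≤ k) (hkm : k + 2 ≤ m)
    (hpos : 0 < log (v (t k).2)) :
    2 * log (v (t (k + 2)).2) + log (v (t k).2) = 4 * log (v (t (k + 1)).2) := by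
  have h := log_valuation_fst_add_inv_two_of_f42_orbit v ht hy (k := k + 1) (by omega) (by omega)
  rw [fst_succ_eq_snd_of_f42_orbit ht hk (by omega), log_valuation_add_eq_of_lt v
    (hy k hk (by omega)) (inv_ne_zero fun h => by simp [h] at hv2) (by simpa [hv2] using hpos)]
    at h
  linarith

theorem two_pow_le_neg_log_valuation_three (hv3 : v 3 < 1) {α : K}
    (hα : α ^ 2 - α - 2⁻¹ = 0) {t : ℕ → K × K} {m : ℕ}
    (ht : ∀ k, 2 ≤ k → k < m → t k = f42 (t (k + 1))) (ht2 : t 2 = (-α, α))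
    (hy : ∀ k, 3 ≤ k → k ≤ m → (t k).2 ≠ 0) (j : ℕ) (hj : 2 * j + 4 ≤ m) :
    2 ^ (j + 2) ≤ -log (v 3) := by
  have hvα := valuation_eq_one_of_sq_sub_sub_inv_two v hv3 hα
  have hy' : ∀ k, 2 ≤ k → k ≤ m → (t k).2 ≠ 0 := by
    intro k hk hkm
    rcases hk.eq_or_lt with rfl | hk
    · simp [ht2, ← v.ne_zero_iff, hvα]
    · exact hy k hk hkm
  have hxy : ∀ k, 2 ≤ k → k < m → (t (k + 1)).1 = (t k).2 :=
    fun _ => fst_succ_eq_snd_of_f42_orbit ht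
  have hlog : ∀ k, 2 ≤ k → k < m → log (v ((t k).1 + 2⁻¹)) =
      4 * log (v (t k).2) - 2 * log (v (t (k + 1)).2) :=
    fun _ => log_valuation_fst_add_inv_two_of_f42_orbit v ht hy'
  -- `w i` is the `w_{i+3}` of the header: `log ∘ v` is minus the additive valuation.
  set w : ℕ → ℤ := fun i => log (v (t (i + 3)).2) with hw
  have hw0 : 2 * w 0 = -log (v (2⁻¹ - α)) := by
    have := hlog 2 le_rfl (by omega)
    simp only [ht2, hvα, log_one, neg_add_eq_sub] at this
    simp only [hw]
    linarith
  have hw1 : w 1 = 2 * w 0 := by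
    have := hlog 3 (by omega) (by omega)
    rw [hxy 2 le_rfl (by omega), ht2, valuation_add_inv_two_eq_one v hv3 hα] at this
    simp only [log_one] at this
    simp only [hw]
    linarith
  have hrec : ∀ i, i + 2 ≤ m - 3 → 0 < w i → 2 * w (i + 2) + w i = 4 * w (i + 1) :=
    fun i hi => log_valuation_snd_recurrence_of_f42_orbit v (valuation_two_eq_one v hv3) ht hy'
      (by omega : 2 ≤ i + 3) (by omega)
  have hβne : v (2⁻¹ - α) ≠ 0 := by
    rw [v.ne_zero_iff, show 2⁻¹ - α = (t 2).1 + 2⁻¹ by rw [ht2]; ring, ht 2 le_rfl (by omega),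
      f42_fst_add_inv_two]
    exact div_ne_zero (pow_ne_zero _ (hxy 2 le_rfl (by omega) ▸ hy' 2 le_rfl (by omega)))
      (pow_ne_zero _ (hy' 3 (by omega) (by omega)))
  have hw0pos : 0 < w 0 := by
    have := (log_lt_log hβne one_ne_zero).2 (valuation_inv_two_sub_lt_one v hv3 hα)
    simp only [log_one] at this
    linarith
  have := two_pow_le_of_recurrence hw0pos (by linarith) hrec j (by omega)
  rw [← valuation_inv_two_sub_sq v hv3 hα, log_pow, pow_add]
  simp only [nsmul_eq_mul, Nat.cast_ofNat]
  linarith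

end Valuation

section NumberField

variable {F : Type*} [Field F] [NumberField F]

lemma le_finrank_of_pow_dvd_span_natCast {p : ℕ} (hp : p.Prime) (P : HeightOneSpectrum (𝓞 F))
    {e : ℕ} (h : P.asIdeal ^ e ∣ Ideal.span {(p : 𝓞 F)}) : e ≤ Module.finrank ℚ F := by
  rcases Nat.eq_zero_or_pos e with rfl | he
  · exact Nat.zero_le _
  have hdvd := Ideal.absNorm_dvd_absNorm_of_le (Ideal.le_of_dvd h)
  rw [map_pow, Ideal.absNorm_span_natCast, RingOfIntegers.rank] at hdvd
  obtain ⟨i, -, hi⟩ := (Nat.dvd_prime_pow hp).1 ((dvd_pow_self _ he.ne').trans hdvd)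
  have hi0 : i ≠ 0 := by
    rintro rfl
    exact P.isPrime.ne_top (Ideal.absNorm_eq_one_iff.1 (by simpa using hi))
  rw [hi, ← pow_mul, Nat.pow_dvd_pow_iff_le_right hp.one_lt] at hdvd
  exact (Nat.le_mul_of_pos_left e (Nat.pos_of_ne_zero hi0)).trans hdvd

lemma neg_log_valuation_natCast_le_finrank {p : ℕ} (hp : p.Prime) (P : HeightOneSpectrum (𝓞 F)) :
    -log (P.valuation F p) ≤ Module.finrank ℚ F := by
  have hv : P.valuation F p = P.intValuation (p : 𝓞 F) := by
    rw [← P.valuation_of_algebraMap (K := F)]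
    exact congrArg _ (map_natCast _ p).symm
  have hne : P.valuation F p ≠ 0 := by simp [hp.ne_zero]
  have hle : log (P.valuation F p) ≤ 0 := by
    simpa using (log_le_log hne one_ne_zero).2 (hv ▸ P.intValuation_le_one _)
  obtain ⟨e, he⟩ := Int.eq_ofNat_of_zero_le (neg_nonneg.2 hle)
  rw [he, Nat.cast_le]
  refine le_finrank_of_pow_dvd_span_natCast hp P ((P.intValuation_le_pow_iff_dvd _ e).1 ?_)
  rw [← hv, ← exp_log hne, ← he, neg_neg]

lemma exists_valuation_natCast_lt_one {p : ℕ} (hp : p.Prime) :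
    ∃ P : HeightOneSpectrum (𝓞 F), P.valuation F p < 1 := by
  have hne : Ideal.span {(p : 𝓞 F)} ≠ ⊤ := by
    intro h
    have := Ideal.absNorm_span_natCast (S := 𝓞 F) p
    rw [h, Ideal.absNorm_top, eq_comm, Nat.pow_eq_one] at this
    exact hp.ne_one (this.resolve_right Module.finrank_pos.ne')
  obtain ⟨M, hM, hpM⟩ := Ideal.exists_le_maximal _ hne
  have hp0 : (p : 𝓞 F) ≠ 0 := by exact_mod_cast hp.ne_zero
  refine ⟨⟨M, hM.isPrime, fun h => hp0 ?_⟩, ?_⟩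
  · simpa [h] using hpM (Ideal.mem_span_singleton_self _)
  · rw [← map_natCast (algebraMap (𝓞 F) F), HeightOneSpectrum.valuation_lt_one_iff_mem]
    exact hpM (Ideal.mem_span_singleton_self _)

end NumberField

theorem stmt19_general (α : Qbar) (hα : α ^ 2 - α - (2 : Qbar)⁻¹ = 0)
    (s : ℕ → Qbar × Qbar)
    (h2 : s 2 = (-α, α))
    (h3x : (s 3).1 = α) (h3y : (s 3).2 ^ 2 = α ^ 4 / ((2 : Qbar)⁻¹ - α))
    (hrec : ∀ n, 4 ≤ n → (s n).2 ≠ 0 ∧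
      (s (n - 1)).1 = (s n).1 ^ 4 / (s n).2 ^ 2 - (2 : Qbar)⁻¹ ∧
      (s (n - 1)).2 = (s n).1) :
    ∀ N : ℕ, ∃ M : ℕ, ∀ n, M ≤ n →
      N < Module.finrank ℚ
        (IntermediateField.adjoin ℚ {(s n).1, (s n).2} : IntermediateField ℚ Qbar) := by
  have hs := eq_f42_of_backward_orbit hα h2 h3x h3y hrec
  have hy := snd_ne_zero_of_backward_orbit hα h3y fun n hn => (hrec n hn).1
  intro N
  refine ⟨2 * N + 4, fun n hn => ?_⟩
  set F := IntermediateField.adjoin ℚ {(s n).1, (s n).2}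
  have : FiniteDimensional ℚ F := IntermediateField.finiteDimensional_adjoin
    fun x _ => (Algebra.IsAlgebraic.isAlgebraic x).isIntegral
  have : NumberField F := ⟨⟩
  set φ := algebraMap F Qbar
  obtain ⟨t, ht, hts⟩ := exists_f42_orbit_map φ hs (p := (⟨(s n).1,
    IntermediateField.subset_adjoin _ _ (by simp)⟩, ⟨(s n).2,
    IntermediateField.subset_adjoin _ _ (by simp)⟩)) rfl
  have ht2 := hts 2 le_rfl (by omega)
  rw [h2, Prod.map, Prod.mk.injEq] at ht2
  have hα' : (t 2).2 ^ 2 - (t 2).2 - 2⁻¹ = 0 := φ.injective (by simp [ht2.2, hα, map_ofNat])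
  have ht2' : t 2 = (-(t 2).2, (t 2).2) := Prod.ext (φ.injective (by simp [ht2.1, ht2.2])) rfl
  have hyt : ∀ k, 3 ≤ k → k ≤ n → (t k).2 ≠ 0 := fun k hk hkn h =>
    hy k hk (by rw [← congrArg Prod.snd (hts k (by omega) hkn)]; simp [h])
  obtain ⟨P, hP⟩ := exists_valuation_natCast_lt_one (F := F) Nat.prime_three
  suffices (N : ℤ) < Module.finrank ℚ F by exact_mod_cast this
  calc (N : ℤ) < 2 ^ (N + 2) := by
        exact_mod_cast Nat.lt_two_pow_self.trans (Nat.pow_lt_pow_right one_lt_two (by omega))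
    _ ≤ -log (P.valuation F 3) := two_pow_le_neg_log_valuation_three _ (by simpa using hP) hα'
      (fun k _ hk => ht k hk) ht2' hyt N hn
    _ ≤ Module.finrank ℚ F := by simpa using neg_log_valuation_natCast_le_finrank Nat.prime_three P

/-- Let `α ∈ ℚ̄` with `α² - α - 1/2 = 0`, and let `(x_n,y_n)_{n≥0}` be a backward orbit of
`(α,α)` under `f_{4,2}(x,y) = (x⁴/y² - 1/2, x)` whose first four terms are the prescribed
`(α,α), (α,-α), (-α,α), (α, (α⁴/(1/2-α))^{1/2})` and which is arbitrary thereafter.  Then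
the degrees `[ℚ(x_n,y_n) : ℚ]` tend to infinity as `n → ∞`. -/
theorem stmt19 (α : Qbar) (hα : α ^ 2 - α - (2 : Qbar)⁻¹ = 0)
    (s : ℕ → Qbar × Qbar)
    (h0 : s 0 = (α, α)) (h1 : s 1 = (α, -α)) (h2 : s 2 = (-α, α))
    (h3x : (s 3).1 = α) (h3y : (s 3).2 ^ 2 = α ^ 4 / ((2 : Qbar)⁻¹ - α))
    (hrec : ∀ n, 4 ≤ n → (s n).2 ≠ 0 ∧
      (s (n - 1)).1 = (s n).1 ^ 4 / (s n).2 ^ 2 - (2 : Qbar)⁻¹ ∧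
      (s (n - 1)).2 = (s n).1) :
    ∀ N : ℕ, ∃ M : ℕ, ∀ n, M ≤ n →
      N < Module.finrank ℚ
        (IntermediateField.adjoin ℚ {(s n).1, (s n).2} : IntermediateField ℚ Qbar) :=
  stmt19_general α hα s h2 h3x h3y hrec
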